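/- For two finite sets of variables x_1,...,x_m and y_1,...,y_n, the product over all i in [m] and j in [n] of (1 + x_i y_j) equals the sum over partitions λ of s_λ(x_1,...,x_m)·s_{λ'}(y_1,...,y_n), where λ' is the conjugate partition. -/

import Mathlib

open Classical in
/-- The Schur polynomial `s_μ(x_0, …, x_{m-1})`, defined as the generating function
of semistandard Young tableaux of shape `μ` with entries in `{0, …, m-1}`. -/
noncomputable def schurSsyt {R : Type*} [CommRing R] (m : ℕ) (μ : YoungDiagram)
    (x : ℕ → R) : R :=
  ∑ᶠ T : SemistandardYoungTableau μ,
    if ∀ c ∈ μ.cells, T c.1 c.2 < m then ∏ c ∈ μ.cells, x (T c.1 c.2) else 0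

/-!
Write `H_t(ν, μ) = t ^ |μ / ν|` if `μ / ν` is a horizontal strip and `0` otherwise, and `V_t`
likewise for vertical strips. Removing the cells holding the largest entry of a tableau gives the
branching rule `s_μ(x_0, …, x_m) = ∑_ν H_{x_m}(ν, μ) s_ν(x_0, …, x_{m-1})`, and by transposition
`s_{μ'}(y_0, …, y_n) = ∑_ρ V_{y_n}(ρ, μ) s_{ρ'}(y_0, …, y_{n-1})`. With these, induction on `m`
reduces the theorem to the dual Pieri rule `∑_μ H_t(ν, μ) s_{μ'}(y) = ∏_j (1 + t y_j) s_{ν'}(y)`,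
and induction on `n` reduces that to the commutation relation
`∑_μ H_t(ν, μ) V_u(ρ, μ) = (1 + t u) ∑_σ V_u(σ, ν) H_t(σ, ρ)`.
The `μ` contributing on the left form an interval `[ν ⊔ ρ, stripSup ν ρ]` of Young's lattice, the
`σ` on the right an interval `[stripInf ν ρ, ν ⊓ ρ]`, and in both the skew shape between the
endpoints has at most one cell in each row and column. So each side is a monomial times a power of
`1 + t u`, and the two exponents differ by one because
`|stripSup ν ρ| + |stripInf ν ρ| = |ν| + |ρ| + 1`.
All sums over diagrams run over a rectangle large enough to contain every nonzero term.
-/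

open Finset

open scoped Classical

namespace YoungDiagram

variable {μ ν ρ σ κ : YoungDiagram}

theorem le_iff_rowLen_le : μ ≤ ν ↔ ∀ i, μ.rowLen i ≤ ν.rowLen i := by
  refine ⟨fun h i => forall_lt_iff_le.1 fun j hj => ?_, fun h c hc => ?_⟩
  · exact mem_iff_lt_rowLen.1 (h (mem_iff_lt_rowLen.2 hj))
  · exact mem_iff_lt_rowLen.2 ((mem_iff_lt_rowLen.1 hc).trans_le (h c.1))

theorem colLen_le_colLen (h : μ ≤ ν) (j : ℕ) : μ.colLen j ≤ ν.colLen j :=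
  forall_lt_iff_le.1 fun _ hi => mem_iff_lt_colLen.1 (h (mem_iff_lt_colLen.2 hi))

theorem rowLen_eq_zero_iff {i : ℕ} : μ.rowLen i = 0 ↔ μ.colLen 0 ≤ i := by
  rw [← not_lt, ← mem_iff_lt_colLen, mem_iff_lt_rowLen]
  omega

theorem card_eq_sum_rowLen {K : ℕ} (h : μ.rowLen K = 0) :
    μ.card = ∑ i ∈ range K, μ.rowLen i := by
  rw [YoungDiagram.card, card_eq_sum_card_fiberwise (f := Prod.fst) (t := range K)]
  · simp only [rowLen_eq_card, row]
  · intro c hc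
    have := rowLen_eq_zero_iff.1 h
    have := mem_iff_lt_colLen.1 (μ.up_left_mem le_rfl (Nat.zero_le c.2) ((mem_cells c).1 hc))
    simp only [coe_range, Set.mem_Iio]
    omega

theorem card_le_card (h : μ ≤ ν) : μ.card ≤ ν.card :=
  Finset.card_le_card (cells_subset_iff.2 h)

theorem card_transpose (μ : YoungDiagram) : μ.transpose.card = μ.card :=
  Finset.card_map _

theorem card_sup_add_card_inf (μ ν : YoungDiagram) :
    (μ ⊔ ν).card + (μ ⊓ ν).card = μ.card + ν.card := by
  simp only [YoungDiagram.card, cells_sup, cells_inf]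
  exact card_union_add_card_inter _ _

theorem transpose_bot : (⊥ : YoungDiagram).transpose = ⊥ :=
  transposeOrderIso.map_bot

theorem transpose_eq_bot_iff : μ.transpose = ⊥ ↔ μ = ⊥ := by
  rw [transpose_eq_iff_eq_transpose, transpose_bot]

def ofRowLen (K : ℕ) (f : ℕ → ℕ) (hf : Antitone f) : YoungDiagram where
  cells := (range K ×ˢ range (f 0)).filter fun c => c.2 < f c.1
  isLowerSet := by
    rintro ⟨i, j⟩ ⟨i', j'⟩ ⟨hi : i' ≤ i, hj : j' ≤ j⟩ h
    simp only [coe_filter, mem_product, mem_range, Set.mem_ofPred_eq] at h ⊢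
    have := hf hi
    have := hf (Nat.zero_le i')
    omega

theorem mem_ofRowLen {K : ℕ} {f : ℕ → ℕ} {hf : Antitone f} {i j : ℕ} :
    (i, j) ∈ ofRowLen K f hf ↔ i < K ∧ j < f i := by
  have := hf (Nat.zero_le i)
  simp only [← mem_cells, ofRowLen, mem_filter, mem_product, mem_range]
  omega

theorem rowLen_ofRowLen {K : ℕ} {f : ℕ → ℕ} {hf : Antitone f} (hK : f K = 0) (i : ℕ) :
    (ofRowLen K f hf).rowLen i = f i := by
  refine eq_of_forall_lt_iff fun j => ?_
  rw [← mem_iff_lt_rowLen, mem_ofRowLen]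
  rcases lt_or_ge i K with hi | hi
  · simp [hi]
  · have := hf hi
    omega

def rectangle (M N : ℕ) : YoungDiagram :=
  ofRowLen M (fun _ => N) antitone_const

theorem le_rectangle_iff {M N : ℕ} :
    μ ≤ rectangle M N ↔ μ.colLen 0 ≤ M ∧ μ.rowLen 0 ≤ N := by
  refine ⟨fun h => ⟨?_, ?_⟩, fun ⟨hM, hN⟩ c hc => ?_⟩
  · by_contra! hM
    simpa using mem_ofRowLen.1 (h (mem_iff_lt_colLen.2 hM))
  · by_contra! hN
    simpa using mem_ofRowLen.1 (h (mem_iff_lt_rowLen.2 hN))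
  · have := (mem_iff_lt_colLen.1 hc).trans_le (μ.colLen_anti 0 c.2 (Nat.zero_le _))
    have := (mem_iff_lt_rowLen.1 hc).trans_le (μ.rowLen_anti 0 c.1 (Nat.zero_le _))
    exact mem_ofRowLen.2 (by omega)

noncomputable instance : LocallyFiniteOrder YoungDiagram :=
  LocallyFiniteOrder.ofFiniteIcc fun _ ν =>
    ((ν.cells.powerset.finite_toSet.preimage fun _ _ _ _ h => YoungDiagram.ext h)).subset
      fun _ hμ => by simpa using cells_subset_iff.2 hμ.2

/-- `ν ≤ μ` and the skew shape `μ / ν` has at most one cell in each column. -/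
def IsHorizontalStrip (ν μ : YoungDiagram) : Prop :=
  ν ≤ μ ∧ ∀ i j, (i + 1, j) ∈ μ → (i, j) ∈ ν

/-- `ν ≤ μ` and the skew shape `μ / ν` has at most one cell in each row. -/
def IsVerticalStrip (ν μ : YoungDiagram) : Prop :=
  ν ≤ μ ∧ ∀ i j, (i, j + 1) ∈ μ → (i, j) ∈ ν

theorem isHorizontalStrip_iff :
    IsHorizontalStrip ν μ ↔ ν ≤ μ ∧ ∀ i, μ.rowLen (i + 1) ≤ ν.rowLen i := by
  simp only [IsHorizontalStrip, mem_iff_lt_rowLen]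
  exact and_congr_right fun _ => forall_congr' fun _ => forall_lt_iff_le

theorem isVerticalStrip_iff :
    IsVerticalStrip ν μ ↔ ν ≤ μ ∧ ∀ i, μ.rowLen i ≤ ν.rowLen i + 1 := by
  simp only [IsVerticalStrip, mem_iff_lt_rowLen]
  refine and_congr_right fun _ => forall_congr' fun i => ⟨fun h => ?_, fun h j hj => by omega⟩
  by_contra! hlt
  exact lt_irrefl _ (h _ hlt)

theorem isHorizontalStrip_transpose_iff :
    IsHorizontalStrip ν.transpose μ.transpose ↔ IsVerticalStrip ν μ := by
  simp only [IsHorizontalStrip, IsVerticalStrip, transpose_le_iff, mem_transpose, Prod.swap_prod_mk]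
  exact and_congr_right fun _ => forall_comm

theorem IsHorizontalStrip.of_le_left (h : IsHorizontalStrip ν μ) (h₁ : ν ≤ κ)
    (h₂ : κ ≤ μ) :
    IsHorizontalStrip κ μ :=
  ⟨h₂, fun i j hc => h₁ (h.2 i j hc)⟩

theorem IsHorizontalStrip.of_le_right (h : IsHorizontalStrip ν μ) (h₁ : ν ≤ κ)
    (h₂ : κ ≤ μ) :
    IsHorizontalStrip ν κ :=
  ⟨h₁, fun i j hc => h.2 i j (h₂ hc)⟩

theorem IsVerticalStrip.of_le_left (h : IsVerticalStrip ν μ) (h₁ : ν ≤ κ)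
    (h₂ : κ ≤ μ) :
    IsVerticalStrip κ μ :=
  ⟨h₂, fun i j hc => h₁ (h.2 i j hc)⟩

theorem IsVerticalStrip.of_le_right (h : IsVerticalStrip ν μ) (h₁ : ν ≤ κ)
    (h₂ : κ ≤ μ) :
    IsVerticalStrip ν κ :=
  ⟨h₁, fun i j hc => h.2 i j (h₂ hc)⟩

theorem isLowerSet_cells_union {L U : YoungDiagram} (hh : IsHorizontalStrip L U)
    (hv : IsVerticalStrip L U) {E : Finset (ℕ × ℕ)} (hE : E ⊆ U.cells \ L.cells) :
    IsLowerSet (↑(L.cells ∪ E) : Set (ℕ × ℕ)) := by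
  rintro ⟨i, j⟩ ⟨i', j'⟩ ⟨hi, hj⟩ hc
  simp only [coe_union, Set.mem_union, mem_coe, mem_cells] at hc ⊢
  rcases hc with hc | hc
  · exact Or.inl (L.up_left_mem hi hj hc)
  have hU : (i, j) ∈ U := (mem_cells _).1 (mem_sdiff.1 (hE hc)).1
  rcases hi.lt_or_eq with hi | rfl
  · obtain ⟨k, rfl⟩ : ∃ k, i = k + 1 := ⟨i - 1, by omega⟩
    exact Or.inl (L.up_left_mem (by omega) hj (hh.2 k j hU))
  rcases hj.lt_or_eq with hj | rfl
  · obtain ⟨k, rfl⟩ : ∃ k, j = k + 1 := ⟨j - 1, by omega⟩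
    exact Or.inl (L.up_left_mem le_rfl (by omega) (hv.2 i' k hU))
  exact Or.inr hc

/-- The largest `μ` such that `μ / ν` is a horizontal and `μ / ρ` a vertical strip, if any. -/
def stripSup (ν ρ : YoungDiagram) : YoungDiagram :=
  ofRowLen (ν.colLen 0 + 1)
    (fun | 0 => ρ.rowLen 0 + 1 | i + 1 => min (ρ.rowLen (i + 1) + 1) (ν.rowLen i))
    (antitone_nat_of_succ_le fun i => by
      rcases i with _ | i
      · have := ρ.rowLen_anti 0 (0 + 1) (by omega)
        dsimp only
        omega
      · have := ρ.rowLen_anti (i + 1) (i + 1 + 1) (by omega)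
        have := ν.rowLen_anti i (i + 1) (by omega)
        dsimp only
        omega)

/-- The smallest `σ` such that `ν / σ` is a vertical and `ρ / σ` a horizontal strip, if any. -/
def stripInf (ν ρ : YoungDiagram) : YoungDiagram :=
  ofRowLen (ν.colLen 0 + ρ.colLen 0) (fun i => max (ν.rowLen i - 1) (ρ.rowLen (i + 1)))
    fun i j hij => max_le_max (Nat.sub_le_sub_right (ν.rowLen_anti i j hij) 1)
      (ρ.rowLen_anti _ _ (by omega))

theorem rowLen_stripSup_zero : (stripSup ν ρ).rowLen 0 = ρ.rowLen 0 + 1 :=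
  rowLen_ofRowLen (by simp [rowLen_eq_zero_iff]) 0

theorem rowLen_stripSup_succ (i : ℕ) :
    (stripSup ν ρ).rowLen (i + 1) = min (ρ.rowLen (i + 1) + 1) (ν.rowLen i) :=
  rowLen_ofRowLen (by simp [rowLen_eq_zero_iff]) (i + 1)

theorem rowLen_stripInf (i : ℕ) :
    (stripInf ν ρ).rowLen i = max (ν.rowLen i - 1) (ρ.rowLen (i + 1)) :=
  rowLen_ofRowLen (by
    rw [rowLen_eq_zero_iff.2 (by omega : ν.colLen 0 ≤ ν.colLen 0 + ρ.colLen 0),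
      rowLen_eq_zero_iff.2 (by omega : ρ.colLen 0 ≤ ν.colLen 0 + ρ.colLen 0 + 1)]
    rfl) i

theorem rowLen_stripSup_le (i : ℕ) : (stripSup ν ρ).rowLen i ≤ ρ.rowLen i + 1 := by
  rcases i with _ | i
  · rw [rowLen_stripSup_zero]
  · rw [rowLen_stripSup_succ]
    exact min_le_left _ _

theorem isHorizontalStrip_and_isVerticalStrip_iff :
    IsHorizontalStrip ν μ ∧ IsVerticalStrip ρ μ ↔ ν ⊔ ρ ≤ μ ∧ μ ≤ stripSup ν ρ := by
  rw [isHorizontalStrip_iff, isVerticalStrip_iff, sup_le_iff,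
    le_iff_rowLen_le (ν := stripSup ν ρ)]
  refine ⟨fun ⟨⟨hν, h₁⟩, hρ, h₂⟩ => ⟨⟨hν, hρ⟩, fun i => ?_⟩,
    fun ⟨⟨hν, hρ⟩, h⟩ => ⟨⟨hν, fun i => ?_⟩, hρ, fun i => ?_⟩⟩
  · rcases i with _ | i
    · exact (h₂ 0).trans_eq rowLen_stripSup_zero.symm
    · exact (le_min (h₂ _) (h₁ i)).trans_eq (rowLen_stripSup_succ i).symm
  · exact (h (i + 1)).trans ((rowLen_stripSup_succ i).trans_le (min_le_right _ _))
  · exact (h i).trans (rowLen_stripSup_le i)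

theorem isVerticalStrip_and_isHorizontalStrip_iff :
    IsVerticalStrip σ ν ∧ IsHorizontalStrip σ ρ ↔ stripInf ν ρ ≤ σ ∧ σ ≤ ν ⊓ ρ := by
  rw [isVerticalStrip_iff, isHorizontalStrip_iff, le_inf_iff,
    le_iff_rowLen_le (μ := stripInf ν ρ)]
  simp only [rowLen_stripInf, max_le_iff, forall_and, Nat.sub_le_iff_le_add]
  tauto

theorem sup_le_stripSup_iff : ν ⊔ ρ ≤ stripSup ν ρ ↔ stripInf ν ρ ≤ ν ⊓ ρ := by
  rw [sup_le_iff, le_inf_iff]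
  simp only [le_iff_rowLen_le, rowLen_stripInf]
  constructor
  · rintro ⟨h₁, h₂⟩
    have hν : ∀ i, ρ.rowLen (i + 1) ≤ ν.rowLen i := fun i => by
      have := h₂ (i + 1)
      rw [rowLen_stripSup_succ] at this
      omega
    refine ⟨fun i => ?_, fun i => ?_⟩
    · have := hν i
      omega
    · have := hν i
      have := (h₁ i).trans (rowLen_stripSup_le i)
      have := ρ.rowLen_anti i (i + 1) (by omega)
      omega
  · rintro ⟨h₁, h₂⟩
    refine ⟨fun i => ?_, fun i => ?_⟩ <;> rcases i with _ | i <;>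
      simp only [rowLen_stripSup_zero, rowLen_stripSup_succ]
    · have := h₂ 0
      omega
    · have := h₂ (i + 1)
      have := h₁ i
      have := ν.rowLen_anti i (i + 1) (by omega)
      omega
    · omega
    · have := h₁ i
      omega

theorem card_stripSup_add_card_stripInf (ν ρ : YoungDiagram) :
    (stripSup ν ρ).card + (stripInf ν ρ).card = ν.card + ρ.card + 1 := by
  -- With `g i = max (ν.rowLen (i - 1)) (ρ.rowLen i + 1)`, row `i + 1` of the left side is
  -- `ρ.rowLen (i + 1) + ν.rowLen i + g (i + 2) - g (i + 1)`: the sum telescopes.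
  have partial_sums : ∀ K, ∑ i ∈ range (K + 1),
      ((stripSup ν ρ).rowLen i + (stripInf ν ρ).rowLen i)
      = ∑ i ∈ range (K + 1), ρ.rowLen i + ∑ i ∈ range K, ν.rowLen i
        + max (ν.rowLen K) (ρ.rowLen (K + 1) + 1) := by
    intro K
    induction K with
    | zero =>
      simp only [zero_add, range_one, sum_singleton, range_zero, sum_empty, rowLen_stripSup_zero,
        rowLen_stripInf]
      omega
    | succ K ih =>
      rw [sum_range_succ, ih, sum_range_succ (fun i => ρ.rowLen i) (K + 1),
        sum_range_succ (fun i => ν.rowLen i) K,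
        rowLen_stripSup_succ, rowLen_stripInf]
      omega
  set K := ν.colLen 0 + ρ.colLen 0
  have hν : ν.rowLen K = 0 := rowLen_eq_zero_iff.2 (by omega)
  have hρ : ρ.rowLen (K + 1) = 0 := rowLen_eq_zero_iff.2 (by omega)
  have hsup : (stripSup ν ρ).rowLen (K + 1) = 0 := by rw [rowLen_stripSup_succ, hν]; simp
  have hinf : (stripInf ν ρ).rowLen (K + 1) = 0 := by
    rw [rowLen_stripInf, rowLen_eq_zero_iff.2 (by omega : ν.colLen 0 ≤ K + 1),
      rowLen_eq_zero_iff.2 (by omega : ρ.colLen 0 ≤ K + 1 + 1)]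
    rfl
  rw [card_eq_sum_rowLen hsup, card_eq_sum_rowLen hinf, card_eq_sum_rowLen hν,
    card_eq_sum_rowLen hρ, ← sum_add_distrib, partial_sums, hν, hρ]
  omega

theorem stripSup_le_rectangle {M N : ℕ} (hν : ν.colLen 0 < M) (hρ : ρ.rowLen 0 < N) :
    stripSup ν ρ ≤ rectangle M N := by
  obtain ⟨M, rfl⟩ : ∃ k, M = k + 1 := ⟨M - 1, by omega⟩
  refine le_rectangle_iff.2 ⟨rowLen_eq_zero_iff.1 ?_, by rw [rowLen_stripSup_zero]; omega⟩
  rw [rowLen_stripSup_succ, rowLen_eq_zero_iff.2 (by omega : ν.colLen 0 ≤ M)]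
  simp

section Weights

variable {R : Type*} [CommSemiring R]

theorem sum_Icc_pow_mul_pow {L U : YoungDiagram} (hh : IsHorizontalStrip L U)
    (hv : IsVerticalStrip L U) (a b : R) :
    ∑ μ ∈ Icc L U, a ^ (μ.card - L.card) * b ^ (U.card - μ.card)
      = (a + b) ^ (U.card - L.card) := by
  have hLU : L.cells ⊆ U.cells := cells_subset_iff.2 hh.1
  rw [YoungDiagram.card, YoungDiagram.card, ← card_sdiff_of_subset hLU,
    ← sum_pow_mul_eq_add_pow]
  refine sum_bij' (fun μ _ => μ.cells \ L.cells)
    (fun E hE => ⟨L.cells ∪ E, isLowerSet_cells_union hh hv (mem_powerset.1 hE)⟩)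
    (fun μ hμ => ?_) (fun E hE => ?_) (fun μ hμ => ?_) (fun E hE => ?_) (fun μ hμ => ?_)
  · exact mem_powerset.2 (sdiff_subset_sdiff (cells_subset_iff.2 (mem_Icc.1 hμ).2) subset_rfl)
  · have hE' := mem_powerset.1 hE
    refine mem_Icc.2 ⟨cells_subset_iff.1 subset_union_left, cells_subset_iff.1 ?_⟩
    exact union_subset hLU (hE'.trans sdiff_subset)
  · exact YoungDiagram.ext (union_sdiff_of_subset (cells_subset_iff.2 (mem_Icc.1 hμ).1))
  · exact union_sdiff_cancel_left (disjoint_of_subset_right (mem_powerset.1 hE) disjoint_sdiff)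
  · obtain ⟨hLμ, hμU⟩ := mem_Icc.1 hμ
    have := card_le_card hμU
    have := card_le_card hLμ
    rw [card_sdiff_of_subset (cells_subset_iff.2 hLμ), card_sdiff_of_subset hLU]
    congr 2
    simp only [YoungDiagram.card] at this ⊢
    omega

noncomputable def hStripWeight (t : R) (ν μ : YoungDiagram) : R :=
  if IsHorizontalStrip ν μ then t ^ (μ.card - ν.card) else 0

noncomputable def vStripWeight (t : R) (ν μ : YoungDiagram) : R :=
  if IsVerticalStrip ν μ then t ^ (μ.card - ν.card) else 0

theorem hStripWeight_transpose (t : R) (ν μ : YoungDiagram) :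
    hStripWeight t ν.transpose μ.transpose = vStripWeight t ν μ := by
  simp only [hStripWeight, vStripWeight, isHorizontalStrip_transpose_iff, card_transpose]

theorem hStripWeight_bot_right (t : R) (ν : YoungDiagram) :
    hStripWeight t ν ⊥ = if ν = ⊥ then 1 else 0 := by
  split_ifs with h
  · rw [h, hStripWeight, if_pos ⟨le_rfl, fun _ _ hc => absurd hc (notMem_bot _)⟩, Nat.sub_self,
      pow_zero]
  · exact if_neg fun hs => h (le_bot_iff.1 hs.1)

theorem vStripWeight_of_not_le {t : R} (h : ¬ν ≤ μ) : vStripWeight t ν μ = 0 :=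
  if_neg fun hs => h hs.1

theorem sum_Iic_hStripWeight_mul_vStripWeight {M N : ℕ} (t u : R)
    (hU : stripSup ν ρ ≤ rectangle M N) :
    ∑ μ ∈ Iic (rectangle M N), hStripWeight t ν μ * vStripWeight u ρ μ
      = ∑ μ ∈ Icc (ν ⊔ ρ) (stripSup ν ρ),
          t ^ (μ.card - ν.card) * u ^ (μ.card - ρ.card) := by
  simp only [hStripWeight, vStripWeight, ite_zero_mul_ite_zero, ← sum_filter]
  congr 1
  ext μ
  rw [mem_filter, mem_Iic, mem_Icc, isHorizontalStrip_and_isVerticalStrip_iff]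
  exact ⟨And.right, fun h => ⟨h.2.trans hU, h⟩⟩

theorem sum_Iic_vStripWeight_mul_hStripWeight {M N : ℕ} (t u : R) (hν : ν ≤ rectangle M N) :
    ∑ σ ∈ Iic (rectangle M N), vStripWeight u σ ν * hStripWeight t σ ρ
      = ∑ σ ∈ Icc (stripInf ν ρ) (ν ⊓ ρ),
          u ^ (ν.card - σ.card) * t ^ (ρ.card - σ.card) := by
  simp only [hStripWeight, vStripWeight, ite_zero_mul_ite_zero, ← sum_filter]
  congr 1
  ext σ
  rw [mem_filter, mem_Iic, mem_Icc, isVerticalStrip_and_isHorizontalStrip_iff]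
  exact ⟨And.right, fun h => ⟨h.2.trans (inf_le_left.trans hν), h⟩⟩

theorem sum_Icc_sup_stripSup (t u : R) (h : ν ⊔ ρ ≤ stripSup ν ρ) :
    ∑ μ ∈ Icc (ν ⊔ ρ) (stripSup ν ρ), t ^ (μ.card - ν.card) * u ^ (μ.card - ρ.card)
      = t ^ ((ν ⊔ ρ).card - ν.card) * u ^ ((ν ⊔ ρ).card - ρ.card)
        * (t * u + 1) ^ ((stripSup ν ρ).card - (ν ⊔ ρ).card) := by
  obtain ⟨hh, hv⟩ := isHorizontalStrip_and_isVerticalStrip_iff.2 ⟨h, le_rfl⟩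
  rw [← sum_Icc_pow_mul_pow (hh.of_le_left le_sup_left h) (hv.of_le_left le_sup_right h), mul_sum]
  refine sum_congr rfl fun μ hμ => ?_
  have hLμ := (mem_Icc.1 hμ).1
  have := card_le_card hLμ
  have := card_le_card (le_sup_left : ν ≤ ν ⊔ ρ)
  have := card_le_card (le_sup_right : ρ ≤ ν ⊔ ρ)
  rw [show μ.card - ν.card = ((ν ⊔ ρ).card - ν.card) + (μ.card - (ν ⊔ ρ).card) by omega,
    show μ.card - ρ.card = ((ν ⊔ ρ).card - ρ.card) + (μ.card - (ν ⊔ ρ).card) by omega,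
    pow_add, pow_add, mul_pow, one_pow]
  ring

theorem sum_Icc_stripInf_inf (t u : R) (h : stripInf ν ρ ≤ ν ⊓ ρ) :
    ∑ σ ∈ Icc (stripInf ν ρ) (ν ⊓ ρ), u ^ (ν.card - σ.card) * t ^ (ρ.card - σ.card)
      = t ^ (ρ.card - (ν ⊓ ρ).card) * u ^ (ν.card - (ν ⊓ ρ).card)
        * (1 + t * u) ^ ((ν ⊓ ρ).card - (stripInf ν ρ).card) := by
  obtain ⟨hv, hh⟩ := isVerticalStrip_and_isHorizontalStrip_iff.2 ⟨le_rfl, h⟩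
  rw [← sum_Icc_pow_mul_pow (hh.of_le_right h inf_le_right) (hv.of_le_right h inf_le_left),
    mul_sum]
  refine sum_congr rfl fun σ hσ => ?_
  have hσI := (mem_Icc.1 hσ).2
  have := card_le_card hσI
  have := card_le_card (inf_le_left : ν ⊓ ρ ≤ ν)
  have := card_le_card (inf_le_right : ν ⊓ ρ ≤ ρ)
  rw [show ν.card - σ.card = (ν.card - (ν ⊓ ρ).card) + ((ν ⊓ ρ).card - σ.card) by omega,
    show ρ.card - σ.card = (ρ.card - (ν ⊓ ρ).card) + ((ν ⊓ ρ).card - σ.card) by omega,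
    pow_add, pow_add, mul_pow, one_pow]
  ring

theorem sum_hStripWeight_mul_vStripWeight {M N : ℕ} (t u : R) (hν : ν ≤ rectangle M N)
    (hU : stripSup ν ρ ≤ rectangle M N) :
    ∑ μ ∈ Iic (rectangle M N), hStripWeight t ν μ * vStripWeight u ρ μ
      = (1 + t * u)
        * ∑ σ ∈ Iic (rectangle M N), vStripWeight u σ ν * hStripWeight t σ ρ := by
  rw [sum_Iic_hStripWeight_mul_vStripWeight t u hU, sum_Iic_vStripWeight_mul_hStripWeight t u hν]
  by_cases hF : ν ⊔ ρ ≤ stripSup ν ρ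
  · have hF' := sup_le_stripSup_iff.1 hF
    have := card_sup_add_card_inf ν ρ
    have := card_stripSup_add_card_stripInf ν ρ
    have := card_le_card hF'
    have := card_le_card (inf_le_left : ν ⊓ ρ ≤ ν)
    have := card_le_card (inf_le_right : ν ⊓ ρ ≤ ρ)
    rw [sum_Icc_sup_stripSup t u hF, sum_Icc_stripInf_inf t u hF',
      show (ν ⊔ ρ).card - ν.card = ρ.card - (ν ⊓ ρ).card by omega,
      show (ν ⊔ ρ).card - ρ.card = ν.card - (ν ⊓ ρ).card by omega,
      show (stripSup ν ρ).card - (ν ⊔ ρ).card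
        = (ν ⊓ ρ).card - (stripInf ν ρ).card + 1 by omega,
      pow_succ]
    ring
  · rw [Icc_eq_empty hF, Icc_eq_empty (mt sup_le_stripSup_iff.2 hF), sum_empty, sum_empty,
      mul_zero]

end Weights

end YoungDiagram

theorem finite_setOf_bounded_tableaux (m : ℕ) (μ : YoungDiagram) :
    {T : SemistandardYoungTableau μ | ∀ c ∈ μ.cells, T c.1 c.2 < m}.Finite := by
  have : Finite {T : SemistandardYoungTableau μ | ∀ c ∈ μ.cells, T c.1 c.2 < m} :=
    Finite.of_injective (fun T (c : μ.cells) => (⟨T.1 c.1.1 c.1.2, T.2 c.1 c.2⟩ : Fin m))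
      fun T T' h => Subtype.ext <| SemistandardYoungTableau.ext fun i j => by
        by_cases hc : (i, j) ∈ μ
        · exact congrArg Fin.val (congrFun h ⟨(i, j), (YoungDiagram.mem_cells _).2 hc⟩)
        · rw [T.1.zeros hc, T'.1.zeros hc]
  exact Set.toFinite _

noncomputable def boundedTableaux (m : ℕ) (μ : YoungDiagram) :
    Finset (SemistandardYoungTableau μ) :=
  (finite_setOf_bounded_tableaux m μ).toFinset

theorem mem_boundedTableaux {m : ℕ} {μ : YoungDiagram} {T : SemistandardYoungTableau μ} :
    T ∈ boundedTableaux m μ ↔ ∀ c ∈ μ.cells, T c.1 c.2 < m :=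
  Set.Finite.mem_toFinset _

namespace SemistandardYoungTableau

open YoungDiagram

variable {μ ν : YoungDiagram}

theorem le_apply (T : SemistandardYoungTableau μ) {i j : ℕ} (h : (i, j) ∈ μ) :
    i ≤ T i j := by
  induction i with
  | zero => exact Nat.zero_le _
  | succ i ih =>
    exact (ih (μ.up_left_mem (Nat.le_succ i) le_rfl h)).trans_lt
      (T.col_strict (Nat.lt_succ_self i) h)

def restrict (T : SemistandardYoungTableau μ) (h : ν ≤ μ) : SemistandardYoungTableau ν where
  entry i j := if (i, j) ∈ ν then T i j else 0
  row_weak' hj hc := by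
    simp only [if_pos hc, if_pos (ν.up_left_mem le_rfl hj.le hc)]
    exact T.row_weak hj (h hc)
  col_strict' hi hc := by
    simp only [if_pos hc, if_pos (ν.up_left_mem hi.le le_rfl hc)]
    exact T.col_strict hi (h hc)
  zeros' hc := if_neg hc

theorem restrict_apply (T : SemistandardYoungTableau μ) (h : ν ≤ μ) (i j : ℕ) :
    T.restrict h i j = if (i, j) ∈ ν then T i j else 0 :=
  rfl

def shapeLT (T : SemistandardYoungTableau μ) (m : ℕ) : YoungDiagram where
  cells := μ.cells.filter fun c => T c.1 c.2 < m
  isLowerSet := by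
    rintro ⟨i, j⟩ ⟨i', j'⟩ ⟨hi : i' ≤ i, hj : j' ≤ j⟩ h
    simp only [coe_filter, mem_cells, Set.mem_ofPred_eq] at h ⊢
    refine ⟨μ.up_left_mem hi hj h.1, lt_of_le_of_lt ?_ h.2⟩
    exact (T.col_weak hi (μ.up_left_mem le_rfl hj h.1)).trans (T.row_weak_of_le hj h.1)

theorem mem_shapeLT {T : SemistandardYoungTableau μ} {m i j : ℕ} :
    (i, j) ∈ T.shapeLT m ↔ (i, j) ∈ μ ∧ T i j < m := by
  simp only [← mem_cells, shapeLT, mem_filter]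

theorem shapeLT_le (T : SemistandardYoungTableau μ) (m : ℕ) : T.shapeLT m ≤ μ :=
  fun _ hc => (mem_cells _).1 (mem_filter.1 hc).1

theorem isHorizontalStrip_shapeLT {m : ℕ} {T : SemistandardYoungTableau μ}
    (hT : T ∈ boundedTableaux (m + 1) μ) : IsHorizontalStrip (T.shapeLT m) μ := by
  refine ⟨T.shapeLT_le m, fun i j hc =>
    mem_shapeLT.2 ⟨μ.up_left_mem (Nat.le_succ i) le_rfl hc, ?_⟩⟩
  have : T i j < T (i + 1) j := T.col_strict (Nat.lt_succ_self i) hc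
  have : T (i + 1) j < m + 1 := mem_boundedTableaux.1 hT _ ((mem_cells _).2 hc)
  omega

def extend (T : SemistandardYoungTableau ν) (hνμ : IsHorizontalStrip ν μ) {m : ℕ}
    (hT : ∀ c ∈ ν.cells, T c.1 c.2 < m) : SemistandardYoungTableau μ where
  entry i j := if (i, j) ∈ ν then T i j else if (i, j) ∈ μ then m else 0
  row_weak' {i j₁ j₂} hj hc := by
    by_cases h₂ : (i, j₂) ∈ ν
    · simp only [if_pos h₂, if_pos (ν.up_left_mem le_rfl hj.le h₂)]
      exact T.row_weak hj h₂
    · simp only [if_neg h₂, if_pos hc, if_pos (μ.up_left_mem le_rfl hj.le hc)]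
      split_ifs with h₁
      exacts [(hT _ ((mem_cells _).2 h₁)).le, le_rfl]
  col_strict' {i₁ i₂ j} hi hc := by
    have h₁ : (i₁, j) ∈ ν := by
      obtain ⟨k, rfl⟩ : ∃ k, i₂ = k + 1 := ⟨i₂ - 1, by omega⟩
      exact ν.up_left_mem (by omega) le_rfl (hνμ.2 k j hc)
    by_cases h₂ : (i₂, j) ∈ ν
    · simp only [if_pos h₁, if_pos h₂]
      exact T.col_strict hi h₂
    · simp only [if_pos h₁, if_neg h₂, if_pos hc]
      exact hT _ ((mem_cells _).2 h₁)
  zeros' hc := by simp only [if_neg hc, if_neg fun h => hc (hνμ.1 h)]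

section Extend

variable (T : SemistandardYoungTableau ν) (hνμ : IsHorizontalStrip ν μ) {m : ℕ}
  (hT : ∀ c ∈ ν.cells, T c.1 c.2 < m)

theorem extend_apply (i j : ℕ) :
    T.extend hνμ hT i j = if (i, j) ∈ ν then T i j else if (i, j) ∈ μ then m else 0 :=
  rfl

theorem extend_mem_boundedTableaux : T.extend hνμ hT ∈ boundedTableaux (m + 1) μ := by
  refine mem_boundedTableaux.2 fun c hc => ?_
  rw [extend_apply, if_pos ((mem_cells c).1 hc)]
  split_ifs with h
  exacts [(hT c ((mem_cells c).2 h)).trans (Nat.lt_succ_self m), Nat.lt_succ_self m]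

theorem shapeLT_extend : (T.extend hνμ hT).shapeLT m = ν := by
  ext ⟨i, j⟩
  rw [mem_cells, mem_cells, mem_shapeLT, extend_apply]
  by_cases h : (i, j) ∈ ν
  · simp [h, hνμ.1 h, hT _ ((mem_cells _).2 h)]
  · by_cases hμ : (i, j) ∈ μ <;> simp [h, hμ]

theorem restrict_extend : (T.extend hνμ hT).restrict hνμ.1 = T := by
  ext i j
  rw [restrict_apply, extend_apply]
  split_ifs with h
  exacts [rfl, (T.zeros h).symm]

theorem prod_extend {R : Type*} [CommMonoid R] (x : ℕ → R) :
    ∏ c ∈ μ.cells, x (T.extend hνμ hT c.1 c.2)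
      = x m ^ (μ.card - ν.card) * ∏ c ∈ ν.cells, x (T c.1 c.2) := by
  have hsub := cells_subset_iff.2 hνμ.1
  rw [← prod_sdiff hsub, YoungDiagram.card, YoungDiagram.card, ← card_sdiff_of_subset hsub,
    ← prod_const]
  congr 1 <;> refine prod_congr rfl fun c hc => ?_ <;> rw [extend_apply]
  · obtain ⟨hμ, hν⟩ := mem_sdiff.1 hc
    rw [if_neg ((mem_cells c).not.1 hν), if_pos ((mem_cells c).1 hμ)]
  · rw [if_pos ((mem_cells c).1 hc)]

end Extend

theorem extend_restrict_shapeLT {m : ℕ} {T : SemistandardYoungTableau μ}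
    (hT : T ∈ boundedTableaux (m + 1) μ)
    (hT' : ∀ c ∈ (T.shapeLT m).cells, T.restrict (T.shapeLT_le m) c.1 c.2 < m) :
    (T.restrict (T.shapeLT_le m)).extend (isHorizontalStrip_shapeLT hT) hT' = T := by
  ext i j
  rw [extend_apply, restrict_apply]
  by_cases h : (i, j) ∈ T.shapeLT m
  · rw [if_pos h, if_pos h]
  by_cases hμ : (i, j) ∈ μ
  · have : T i j < m + 1 := mem_boundedTableaux.1 hT _ ((mem_cells _).2 hμ)
    have := mt (fun hlt => mem_shapeLT.2 ⟨hμ, hlt⟩) h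
    simp only [if_neg h, if_pos hμ]
    omega
  · rw [if_neg h, if_neg hμ, T.zeros hμ]

end SemistandardYoungTableau

open YoungDiagram SemistandardYoungTableau

theorem sum_boundedTableaux_shapeLT_eq {R : Type*} [CommSemiring R] (x : ℕ → R) {m : ℕ}
    {ν μ : YoungDiagram} (hνμ : IsHorizontalStrip ν μ) :
    ∑ T ∈ boundedTableaux (m + 1) μ with T.shapeLT m = ν, ∏ c ∈ μ.cells, x (T c.1 c.2)
      = x m ^ (μ.card - ν.card)
        * ∑ T ∈ boundedTableaux m ν, ∏ c ∈ ν.cells, x (T c.1 c.2) := by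
  rw [mul_sum]
  symm
  refine sum_bij' (fun T hT => T.extend hνμ (mem_boundedTableaux.1 hT))
    (fun T _ => T.restrict hνμ.1) (fun T hT => ?_) (fun T hT => ?_)
    (fun T hT => restrict_extend T hνμ _) (fun T hT => ?_)
    (fun T hT => (prod_extend T hνμ _ x).symm)
  · exact mem_filter.2 ⟨extend_mem_boundedTableaux T hνμ _, shapeLT_extend T hνμ _⟩
  · obtain ⟨-, rfl⟩ := mem_filter.1 hT
    refine mem_boundedTableaux.2 fun c hc => ?_
    rw [restrict_apply, if_pos ((mem_cells c).1 hc)]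
    exact (mem_shapeLT.1 ((mem_cells c).1 hc)).2
  · obtain ⟨hTb, rfl⟩ := mem_filter.1 hT
    exact extend_restrict_shapeLT hTb _

section Schur

variable {R : Type*} [CommRing R]

theorem schurSsyt_eq_sum (m : ℕ) (μ : YoungDiagram) (x : ℕ → R) :
    schurSsyt m μ x = ∑ T ∈ boundedTableaux m μ, ∏ c ∈ μ.cells, x (T c.1 c.2) := by
  rw [schurSsyt, finsum_eq_finsetSum_of_support_subset _ fun T hT => ?_]
  · exact sum_congr rfl fun T hT => if_pos (mem_boundedTableaux.1 hT)
  · rw [mem_coe, mem_boundedTableaux]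
    by_contra h
    exact hT (if_neg h)

theorem schurSsyt_bot (m : ℕ) (x : ℕ → R) : schurSsyt m ⊥ x = 1 := by
  have hdefault (T : SemistandardYoungTableau ⊥) : T = default :=
    SemistandardYoungTableau.ext fun i j => by
      rw [T.zeros (notMem_bot _), (default : SemistandardYoungTableau ⊥).zeros (notMem_bot _)]
  rw [schurSsyt, finsum_eq_single _ default fun T hT => absurd (hdefault T) hT]
  simp

theorem schurSsyt_eq_zero_of_lt_colLen {m : ℕ} {μ : YoungDiagram} (x : ℕ → R)
    (h : m < μ.colLen 0) : schurSsyt m μ x = 0 := by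
  refine finsum_eq_zero_of_forall_eq_zero fun T => if_neg fun hT => ?_
  have hc : (μ.colLen 0 - 1, 0) ∈ μ := mem_iff_lt_colLen.2 (by omega)
  have := T.le_apply hc
  have : T (μ.colLen 0 - 1) 0 < m := hT _ ((mem_cells _).2 hc)
  omega

theorem schurSsyt_zero (μ : YoungDiagram) (x : ℕ → R) :
    schurSsyt 0 μ x = if μ = ⊥ then 1 else 0 := by
  split_ifs with h
  · rw [h, schurSsyt_bot]
  refine schurSsyt_eq_zero_of_lt_colLen x (Nat.pos_of_ne_zero fun h0 => h ?_)
  exact le_bot_iff.1 fun c hc =>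
    absurd (mem_iff_lt_colLen.1 (μ.up_left_mem (Nat.zero_le c.1) (Nat.zero_le c.2) hc)) (by omega)

theorem schurSsyt_succ (x : ℕ → R) {m : ℕ} {μ : YoungDiagram} {B : Finset YoungDiagram}
    (hB : Iic μ ⊆ B) :
    schurSsyt (m + 1) μ x = ∑ ν ∈ B, hStripWeight (x m) ν μ * schurSsyt m ν x := by
  rw [schurSsyt_eq_sum, ← sum_fiberwise_of_maps_to fun T _ => hB (mem_Iic.2 (T.shapeLT_le m))]
  refine sum_congr rfl fun ν _ => ?_
  rw [schurSsyt_eq_sum, hStripWeight]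
  split_ifs with h
  · exact sum_boundedTableaux_shapeLT_eq x h
  · refine (sum_eq_zero fun T hT => ?_).trans (zero_mul _).symm
    obtain ⟨hTb, rfl⟩ := mem_filter.1 hT
    exact absurd (isHorizontalStrip_shapeLT hTb) h

theorem schurSsyt_succ_transpose (y : ℕ → R) {n : ℕ} {μ : YoungDiagram}
    {B : Finset YoungDiagram} (hB : Iic μ ⊆ B) :
    schurSsyt (n + 1) μ.transpose y
      = ∑ ρ ∈ B, vStripWeight (y n) ρ μ * schurSsyt n ρ.transpose y := by
  rw [schurSsyt_succ y (B := B.image transpose), sum_image fun _ _ _ _ h => transpose_eq_iff.1 h]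
  · simp only [hStripWeight_transpose]
  · intro ν hν
    refine mem_image.2 ⟨ν.transpose, hB (mem_Iic.2 ?_), transpose_transpose ν⟩
    simpa using YoungDiagram.transpose_mono (mem_Iic.1 hν)

theorem sum_hStripWeight_mul_schurSsyt_transpose (y : ℕ → R) (t : R) {M N n : ℕ}
    (hn : n ≤ N) {ν : YoungDiagram} (hν : ν ≤ rectangle M N) (hνM : ν.colLen 0 < M) :
    ∑ μ ∈ Iic (rectangle M N), hStripWeight t ν μ * schurSsyt n μ.transpose y
      = (∏ j ∈ range n, (1 + t * y j)) * schurSsyt n ν.transpose y := by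
  induction n generalizing ν with
  | zero =>
    simp only [schurSsyt_zero, transpose_eq_bot_iff, mul_ite, mul_one, mul_zero, sum_ite_eq',
      mem_Iic, bot_le, if_true, prod_range_zero, hStripWeight_bot_right]
  | succ n ih =>
    let box := Iic (rectangle M N)
    calc ∑ μ ∈ box, hStripWeight t ν μ * schurSsyt (n + 1) μ.transpose y
        = ∑ μ ∈ box, hStripWeight t ν μ
            * ∑ ρ ∈ box, vStripWeight (y n) ρ μ * schurSsyt n ρ.transpose y :=
          sum_congr rfl fun μ hμ => by
            rw [schurSsyt_succ_transpose y (Iic_subset_Iic.2 (mem_Iic.1 hμ))]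
      _ = ∑ ρ ∈ box, (∑ μ ∈ box, hStripWeight t ν μ * vStripWeight (y n) ρ μ)
            * schurSsyt n ρ.transpose y := by
          simp only [mul_sum, sum_mul, mul_assoc]
          exact sum_comm
      _ = ∑ ρ ∈ box, (1 + t * y n)
            * (∑ σ ∈ box, vStripWeight (y n) σ ν * hStripWeight t σ ρ)
            * schurSsyt n ρ.transpose y :=
          sum_congr rfl fun ρ hρ => by
            rcases lt_or_ge (ρ.rowLen 0) N with hρN | hρN
            · rw [sum_hStripWeight_mul_vStripWeight t (y n) hν (stripSup_le_rectangle hνM hρN)]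
            · rw [schurSsyt_eq_zero_of_lt_colLen y (by rw [colLen_transpose]; omega), mul_zero,
                mul_zero]
      _ = (1 + t * y n) * ∑ σ ∈ box, vStripWeight (y n) σ ν
            * ∑ ρ ∈ box, hStripWeight t σ ρ * schurSsyt n ρ.transpose y := by
          simp only [mul_sum, sum_mul, mul_assoc]
          exact sum_comm
      _ = (1 + t * y n) * ∑ σ ∈ box, vStripWeight (y n) σ ν
            * ((∏ j ∈ range n, (1 + t * y j)) * schurSsyt n σ.transpose y) := by
          refine congrArg _ (sum_congr rfl fun σ _ => ?_)
          by_cases hσν : σ ≤ ν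
          · rw [ih (by omega) (hσν.trans hν) ((colLen_le_colLen hσν 0).trans_lt hνM)]
          · rw [vStripWeight_of_not_le hσν, zero_mul, zero_mul]
      _ = (∏ j ∈ range (n + 1), (1 + t * y j)) * schurSsyt (n + 1) ν.transpose y := by
          rw [schurSsyt_succ_transpose y (Iic_subset_Iic.2 hν), prod_range_succ, mul_sum,
            mul_sum]
          exact sum_congr rfl fun σ _ => by ring

theorem prod_prod_one_add_mul_eq_sum_schurSsyt (x y : ℕ → R) {m M : ℕ} (n : ℕ)
    (hm : m ≤ M) :
    ∏ i ∈ range m, ∏ j ∈ range n, (1 + x i * y j)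
      = ∑ μ ∈ Iic (rectangle M n), schurSsyt m μ x * schurSsyt n μ.transpose y := by
  induction m with
  | zero =>
    simp only [prod_range_zero, schurSsyt_zero, ite_mul, one_mul, zero_mul, sum_ite_eq', mem_Iic,
      bot_le, if_true, transpose_bot, schurSsyt_bot]
  | succ m ih =>
    let box := Iic (rectangle M n)
    calc ∏ i ∈ range (m + 1), ∏ j ∈ range n, (1 + x i * y j)
        = (∏ j ∈ range n, (1 + x m * y j))
            * ∑ ν ∈ box, schurSsyt m ν x * schurSsyt n ν.transpose y := by
          rw [prod_range_succ, ih (by omega), mul_comm]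
      _ = ∑ ν ∈ box, schurSsyt m ν x
            * ∑ μ ∈ box, hStripWeight (x m) ν μ * schurSsyt n μ.transpose y := by
          rw [mul_sum]
          refine sum_congr rfl fun ν hν => ?_
          rcases lt_or_ge m (ν.colLen 0) with h | h
          · rw [schurSsyt_eq_zero_of_lt_colLen x h, zero_mul, mul_zero, zero_mul]
          · rw [sum_hStripWeight_mul_schurSsyt_transpose y (x m) le_rfl (mem_Iic.1 hν) (by omega)]
            ring
      _ = ∑ μ ∈ box, (∑ ν ∈ box, hStripWeight (x m) ν μ * schurSsyt m ν x)
            * schurSsyt n μ.transpose y := by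
          simp only [mul_sum, sum_mul]
          rw [sum_comm]
          exact sum_congr rfl fun _ _ => sum_congr rfl fun _ _ => by ring
      _ = ∑ μ ∈ box, schurSsyt (m + 1) μ x * schurSsyt n μ.transpose y :=
          sum_congr rfl fun μ hμ => by rw [schurSsyt_succ x (Iic_subset_Iic.2 (mem_Iic.1 hμ))]

end Schur

/-- The dual Cauchy identity for Schur polynomials in finitely many variables:
`∏_{i<m, j<n} (1 + x_i y_j) = Σ_λ s_λ(x) s_{λ'}(y)`. -/
theorem dual_cauchy_identity_schur {R : Type*} [CommRing R] (m n : ℕ) (x y : ℕ → R) :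
    ∏ i ∈ Finset.range m, ∏ j ∈ Finset.range n, (1 + x i * y j)
      = ∑ᶠ μ : YoungDiagram, schurSsyt m μ x * schurSsyt n μ.transpose y := by
  rw [prod_prod_one_add_mul_eq_sum_schurSsyt x y n le_rfl,
    finsum_eq_finsetSum_of_support_subset _ fun μ hμ => ?_]
  rw [coe_Iic, Set.mem_Iic, le_rectangle_iff]
  by_contra! h
  refine hμ ?_
  dsimp only
  rcases le_or_gt (μ.colLen 0) m with hm | hm
  · have : n < μ.transpose.colLen 0 := by rw [colLen_transpose]; exact h hm
    rw [schurSsyt_eq_zero_of_lt_colLen y this, mul_zero]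
  · rw [schurSsyt_eq_zero_of_lt_colLen x hm, zero_mul]
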